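/- For the first-order Krylov projection V = R, W = D⁻ᵀLᵀ, one has M̂ := WᵀV = -M_∞ and D̂ := WᵀDV = M₀, where M₀ = LR and M_∞ = -LD⁻¹R; moreover both M̂ and D̂ are symmetric. -/

import Mathlib

/-! With `Wᵀ = L D⁻¹` the claimed identities `M̂ = L D⁻¹ R` and `D̂ = L R` are immediate.
For symmetry, the explicit inverse `D⁻¹ = [[-γ A₂₂⁻¹, -A₂₂⁻¹], [I, 0]]` shows that only the top-left
blocks survive against `L = [A₁₂, 0]` and `R = [A₂₂⁻¹A₂₁; 0]`, so
`M̂ = -γ A₁₂ A₂₂⁻² A₁₂ᵀ` and `D̂ = A₁₂ A₂₂⁻¹ A₁₂ᵀ`, both congruences of symmetric matrices. -/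

open Matrix

namespace Matrix

variable {l m n : Type*} [Fintype n] {α : Type*}

theorem IsSymm.mul_mul_transpose [CommSemiring α] {S : Matrix n n α} (hS : S.IsSymm)
    (A : Matrix m n α) : (A * S * Aᵀ).IsSymm := by
  rw [IsSymm, transpose_mul, transpose_mul, transpose_transpose, hS.eq, Matrix.mul_assoc]

theorem transpose_inv_transpose_mul_transpose [DecidableEq n] [CommRing α]
    (D : Matrix n n α) (L : Matrix l n α) : ((Dᵀ)⁻¹ * Lᵀ)ᵀ = L * D⁻¹ := by
  rw [transpose_mul, transpose_transpose, transpose_nonsing_inv, transpose_transpose]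

theorem fromCols_zero_mul_fromRows_zero [Fintype m] [Semiring α]
    (P : Matrix l m α) (Q : Matrix m l α) :
    fromCols P (0 : Matrix l n α) * fromRows Q (0 : Matrix n l α) = P * Q := by
  simp [fromCols_mul_fromRows]

theorem fromCols_zero_mul_fromBlocks_mul_fromRows_zero [Fintype m] [Semiring α]
    (P : Matrix l m α) (Q : Matrix m l α) (X : Matrix m m α) (Y : Matrix m n α)
    (Z : Matrix n m α) (T : Matrix n n α) :
    fromCols P (0 : Matrix l n α) * fromBlocks X Y Z T * fromRows Q (0 : Matrix n l α) =
      P * X * Q := by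
  simp [fromCols_mul_fromBlocks, fromCols_mul_fromRows]

variable [DecidableEq n] [CommRing α]

theorem fromBlocks_zero_one_mul_inv {A : Matrix n n α} (hA : IsUnit A.det) (B : Matrix n n α) :
    fromBlocks 0 1 (-A) (-B) * fromBlocks (-(A⁻¹ * B)) (-A⁻¹) 1 0 = 1 := by
  simp [fromBlocks_multiply, ← Matrix.mul_assoc, mul_nonsing_inv _ hA]

theorem inv_fromBlocks_zero_one {A : Matrix n n α} (hA : IsUnit A.det) (B : Matrix n n α) :
    (fromBlocks 0 1 (-A) (-B))⁻¹ = fromBlocks (-(A⁻¹ * B)) (-A⁻¹) 1 0 :=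
  inv_eq_right_inv (fromBlocks_zero_one_mul_inv hA B)

theorem isUnit_det_fromBlocks_zero_one {A : Matrix n n α} (hA : IsUnit A.det)
    (B : Matrix n n α) : IsUnit (fromBlocks 0 1 (-A) (-B)).det :=
  isUnit_det_of_right_inverse (fromBlocks_zero_one_mul_inv hA B)

end Matrix

theorem stmt_12_general {m n : ℕ} (A12 : Matrix (Fin m) (Fin n) ℝ)
    (A21 : Matrix (Fin n) (Fin m) ℝ) (A22 : Matrix (Fin n) (Fin n) ℝ)
    (hA22 : IsUnit A22.det) (hA22s : A22.IsSymm) (hA : A12ᵀ = A21) (γ : ℝ)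
    (L : Matrix (Fin m) (Fin n ⊕ Fin n) ℝ)
    (D : Matrix (Fin n ⊕ Fin n) (Fin n ⊕ Fin n) ℝ)
    (R V : Matrix (Fin n ⊕ Fin n) (Fin m) ℝ)
    (W : Matrix (Fin n ⊕ Fin n) (Fin m) ℝ)
    (hL : L = fromCols A12 (0 : Matrix (Fin m) (Fin n) ℝ))
    (hD : D = fromBlocks 0 1 (-A22) (-(γ • (1 : Matrix (Fin n) (Fin n) ℝ))))
    (hR : R = fromRows (A22⁻¹ * A21) (0 : Matrix (Fin n) (Fin m) ℝ))
    (hV : V = R) (hW : W = (Dᵀ)⁻¹ * Lᵀ) :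
    Wᵀ * V = -(-(L * D⁻¹ * R)) ∧
    Wᵀ * D * V = L * R ∧
    (Wᵀ * V).IsSymm ∧ (Wᵀ * D * V).IsSymm := by
  have hWt : Wᵀ = L * D⁻¹ := hW ▸ transpose_inv_transpose_mul_transpose D L
  have hM : Wᵀ * V = L * D⁻¹ * R := by rw [hWt, hV]
  have hDhat : Wᵀ * D * V = L * R := by
    rw [hWt, Matrix.mul_assoc L, nonsing_inv_mul _ (hD ▸ isUnit_det_fromBlocks_zero_one hA22 _),
      Matrix.mul_one, hV]
  have hMblock : L * D⁻¹ * R = A12 * (-(γ • A22⁻¹ ^ 2)) * A12ᵀ := by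
    rw [hL, hD, hR, inv_fromBlocks_zero_one hA22,
      fromCols_zero_mul_fromBlocks_mul_fromRows_zero, ← hA]
    simp [sq, Matrix.mul_assoc, Matrix.mul_smul, Matrix.smul_mul]
  have hLR : L * R = A12 * A22⁻¹ * A12ᵀ := by
    rw [hL, hR, fromCols_zero_mul_fromRows_zero, hA, Matrix.mul_assoc]
  refine ⟨by rw [neg_neg, hM], hDhat, ?_, ?_⟩
  · rw [hM, hMblock]
    exact ((hA22s.inv.pow 2).smul γ).neg.mul_mul_transpose A12
  · rw [hDhat, hLR]
    exact hA22s.inv.mul_mul_transpose A12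

theorem stmt_12 {m n : ℕ} (A12 : Matrix (Fin m) (Fin n) ℝ)
    (A21 : Matrix (Fin n) (Fin m) ℝ) (A22 : Matrix (Fin n) (Fin n) ℝ)
    (hA22 : IsUnit A22.det) (hA22s : A22.IsSymm) (hA : A12ᵀ = A21) (γ : ℝ)
    (L : Matrix (Fin m) (Fin n ⊕ Fin n) ℝ)
    (D : Matrix (Fin n ⊕ Fin n) (Fin n ⊕ Fin n) ℝ)
    (R V : Matrix (Fin n ⊕ Fin n) (Fin m) ℝ)
    (W : Matrix (Fin n ⊕ Fin n) (Fin m) ℝ)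
    (hL : L = fromCols A12 (0 : Matrix (Fin m) (Fin n) ℝ))
    (hD : D = fromBlocks 0 1 (-A22) (-(γ • (1 : Matrix (Fin n) (Fin n) ℝ))))
    (hDinv : IsUnit D.det)
    (hR : R = fromRows (A22⁻¹ * A21) (0 : Matrix (Fin n) (Fin m) ℝ))
    (hV : V = R) (hW : W = (Dᵀ)⁻¹ * Lᵀ) :
    Wᵀ * V = -(-(L * D⁻¹ * R)) ∧
    Wᵀ * D * V = L * R ∧
    (Wᵀ * V).IsSymm ∧ (Wᵀ * D * V).IsSymm :=
  stmt_12_general A12 A21 A22 hA22 hA22s hA γ L D R V W hL hD hR hV hW
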